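/- Let G = (V,E) be a connected graph with n = |V| > 4 nodes. Let φ* be the minimum sparsest cut score of G and assume each side of an optimal sparsest cut partition has at least 2 nodes. Let γ > 0 and λ ∈ (0,1), define c_ij = 1 if (i,j) ∈ E and 0 otherwise, and w_ij = 1 if (i,j) ∈ E and λ otherwise. Let 𝒜 denote the feasible set of the Leighton–Rao sparsest cut LP relaxation: vectors x = (x_ij) on pairs of distinct nodes with Σ_{i<j} x_ij = n, x_ij ≤ x_ik + x_jk for all triples of distinct nodes, and x_ij ≥ 0 for all pairs. Then the minimum over x ∈ 𝒜 of Σ_{i<j} c_ij x_ij + (1/(2γ)) Σ_{i<j} w_ij x_ij² is at most (1 + (1 + λn)/(2γ)) φ*. -/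

import Mathlib

open Finset

/-- The set of ordered pairs `(i,j)` with `i < j`, used to index unordered
pairs of distinct nodes. -/
def pairsFin (n : ℕ) : Finset (Fin n × Fin n) :=
  Finset.univ.filter (fun p => p.1 < p.2)

/-- `cut(S)`: the number of edges of `G` with exactly one endpoint in `S`. -/
def cutFin {n : ℕ} (G : SimpleGraph (Fin n)) [DecidableRel G.Adj]
    (S : Finset (Fin n)) : ℕ :=
  ((pairsFin n).filter (fun p => G.Adj p.1 p.2 ∧
    ((p.1 ∈ S ∧ p.2 ∉ S) ∨ (p.1 ∉ S ∧ p.2 ∈ S)))).card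

/-- Feasibility for the Leighton–Rao sparsest cut LP relaxation: symmetric,
nonnegative, triangle inequalities, entries summing (over `i<j`) to `n`. -/
def lrFeas {n : ℕ} (x : Fin n → Fin n → ℝ) : Prop :=
  (∀ i j, x i j = x j i) ∧
  (∀ i j : Fin n, i ≠ j → 0 ≤ x i j) ∧
  (∀ i j k : Fin n, i ≠ j → i ≠ k → j ≠ k → x i j ≤ x i k + x j k) ∧
  (∑ p ∈ pairsFin n, x p.1 p.2 = (n : ℝ))

/-!
Compare the optimum with the cut metric of `S*`, scaled by `α = n / (|S*| |S̄*|)` so that it is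
LR-feasible. Its linear part is `α cut(S*) = φ*`. Its quadratic part is at most
`α² cut(S*) + λ |S*| |S̄*| α² = α φ* + λ n α`, and `α ≤ 1 ≤ cut(S*)` because both sides have at
least two nodes (so `n = |S*| + |S̄*| ≤ |S*| |S̄*|`) and `G` is connected; hence `α ≤ φ*`.
-/

variable {n : ℕ}

def cutMetric (S : Finset (Fin n)) (α : ℝ) (i j : Fin n) : ℝ :=
  if (i ∈ S ↔ j ∈ S) then 0 else α

noncomputable def lrObjective (c w : Fin n → Fin n → ℝ) (γ : ℝ) (x : Fin n → Fin n → ℝ) : ℝ :=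
  (∑ p ∈ pairsFin n, c p.1 p.2 * x p.1 p.2)
    + (1 / (2 * γ)) * ∑ p ∈ pairsFin n, w p.1 p.2 * (x p.1 p.2) ^ 2

lemma mem_pairsFin {p : Fin n × Fin n} : p ∈ pairsFin n ↔ p.1 < p.2 := by
  simp [pairsFin]

lemma card_separated_pairsFin (S : Finset (Fin n)) :
    #{p ∈ pairsFin n | ¬(p.1 ∈ S ↔ p.2 ∈ S)} = #S * #Sᶜ := by
  rw [← card_product]
  refine card_nbij' (fun p => if p.1 ∈ S then p else p.swap)
    (fun q => if q.1 < q.2 then q else q.swap) ?_ ?_ ?_ ?_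
  · rintro ⟨i, j⟩ hp
    simp only [coe_filter, mem_pairsFin, Set.mem_ofPred_eq] at hp
    by_cases hi : i ∈ S <;> simp_all
  · rintro ⟨i, j⟩ hq
    simp only [coe_product, coe_compl, Set.mem_prod, mem_coe, Set.mem_compl_iff] at hq
    have hij : i ≠ j := by rintro rfl; exact hq.2 hq.1
    rcases hij.lt_or_gt with h | h <;> simp [h, h.not_gt, hq.1, hq.2, mem_pairsFin]
  · rintro ⟨i, j⟩ hp
    simp only [coe_filter, mem_pairsFin, Set.mem_ofPred_eq] at hp
    by_cases hi : i ∈ S <;> simp [hi, hp.1, hp.1.not_gt]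
  · rintro ⟨i, j⟩ hq
    simp only [coe_product, coe_compl, Set.mem_prod, mem_coe, Set.mem_compl_iff] at hq
    have hij : i ≠ j := by rintro rfl; exact hq.2 hq.1
    rcases hij.lt_or_gt with h | h <;> simp [h, h.not_gt, hq.1, hq.2]

lemma cutFin_eq_card_filter (G : SimpleGraph (Fin n)) [DecidableRel G.Adj]
    (S : Finset (Fin n)) :
    cutFin G S = #{p ∈ pairsFin n | G.Adj p.1 p.2 ∧ ¬(p.1 ∈ S ↔ p.2 ∈ S)} := by
  rw [cutFin]
  congr 1
  refine filter_congr fun p _ => ?_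
  tauto

lemma one_le_cutFin {G : SimpleGraph (Fin n)} [DecidableRel G.Adj] (hconn : G.Connected)
    {S : Finset (Fin n)} (hS : S.Nonempty) (hSc : Sᶜ.Nonempty) : 1 ≤ cutFin G S := by
  obtain ⟨a, ha⟩ := hS
  obtain ⟨b, hb⟩ := hSc
  obtain ⟨walk⟩ := hconn.preconnected a b
  obtain ⟨d, -, hd₁, hd₂⟩ := walk.exists_boundary_dart (S : Set (Fin n))
    (by simpa using ha) (by simpa using hb)
  rw [mem_coe] at hd₁ hd₂
  rw [cutFin_eq_card_filter, Nat.one_le_iff_ne_zero, ← pos_iff_ne_zero, card_pos]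
  rcases d.adj.ne.lt_or_gt with h | h
  · exact ⟨(d.fst, d.snd), by simp [mem_pairsFin, h, d.adj, hd₁, hd₂]⟩
  · exact ⟨(d.snd, d.fst), by simp [mem_pairsFin, h, d.adj.symm, hd₁, hd₂]⟩

lemma sum_cutMetric (S : Finset (Fin n)) (α : ℝ) :
    ∑ p ∈ pairsFin n, cutMetric S α p.1 p.2 = #S * #Sᶜ * α := by
  simp only [cutMetric, sum_ite, sum_const_zero, sum_const, zero_add, nsmul_eq_mul,
    card_separated_pairsFin, Nat.cast_mul]

lemma lrFeas_cutMetric {S : Finset (Fin n)} (hS : S.Nonempty) (hSc : Sᶜ.Nonempty) :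
    lrFeas (cutMetric S (n / (#S * #Sᶜ))) := by
  have hα : (0 : ℝ) ≤ n / (#S * #Sᶜ) := by positivity
  refine ⟨fun i j => ?_, fun i j _ => ?_, fun i j k _ _ _ => ?_, ?_⟩
  · simp only [cutMetric, Iff.comm]
  · unfold cutMetric; split_ifs <;> simp [hα]
  · unfold cutMetric; split_ifs <;> simp_all
  · rw [sum_cutMetric]
    have : (0 : ℝ) < #S * #Sᶜ := by simp [hS.card_pos, hSc.card_pos]
    field_simp

lemma sum_mul_cutMetric (G : SimpleGraph (Fin n)) [DecidableRel G.Adj]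
    (S : Finset (Fin n)) (α : ℝ) {c : Fin n → Fin n → ℝ}
    (hc : ∀ i j, c i j = if G.Adj i j then 1 else 0) :
    ∑ p ∈ pairsFin n, c p.1 p.2 * cutMetric S α p.1 p.2 = cutFin G S * α := by
  have hterm : ∀ p ∈ pairsFin n, c p.1 p.2 * cutMetric S α p.1 p.2
      = if G.Adj p.1 p.2 ∧ ¬(p.1 ∈ S ↔ p.2 ∈ S) then α else 0 := by
    intro p _
    simp only [hc, cutMetric]
    split_ifs <;> simp_all
  rw [sum_congr rfl hterm, sum_ite, sum_const_zero, add_zero, sum_const, nsmul_eq_mul,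
    cutFin_eq_card_filter]

lemma sum_mul_cutMetric_sq_le (G : SimpleGraph (Fin n)) [DecidableRel G.Adj]
    (S : Finset (Fin n)) (α : ℝ) {lam : ℝ} (hlam : 0 ≤ lam) {w : Fin n → Fin n → ℝ}
    (hw : ∀ i j, w i j = if G.Adj i j then 1 else lam) :
    ∑ p ∈ pairsFin n, w p.1 p.2 * (cutMetric S α p.1 p.2) ^ 2
      ≤ cutFin G S * α ^ 2 + lam * (#S * #Sᶜ) * α ^ 2 := by
  have hterm : ∀ p ∈ pairsFin n, w p.1 p.2 * (cutMetric S α p.1 p.2) ^ 2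
      ≤ (if G.Adj p.1 p.2 ∧ ¬(p.1 ∈ S ↔ p.2 ∈ S) then α ^ 2 else 0)
        + lam * cutMetric S (α ^ 2) p.1 p.2 := by
    intro p _
    simp only [hw, cutMetric]
    split_ifs <;> simp_all [mul_nonneg hlam (sq_nonneg α)]
  refine (sum_le_sum hterm).trans_eq ?_
  rw [sum_add_distrib, ← mul_sum, sum_cutMetric, sum_ite, sum_const_zero, add_zero, sum_const,
    nsmul_eq_mul, ← cutFin_eq_card_filter]
  ring

lemma lrObjective_cutMetric_le {G : SimpleGraph (Fin n)} [DecidableRel G.Adj]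
    (hconn : G.Connected) {S : Finset (Fin n)} (hS : 2 ≤ #S) (hSc : 2 ≤ #Sᶜ)
    {γ lam : ℝ} (hγ : 0 < γ) (hlam : 0 ≤ lam) {c w : Fin n → Fin n → ℝ}
    (hc : ∀ i j, c i j = if G.Adj i j then 1 else 0)
    (hw : ∀ i j, w i j = if G.Adj i j then 1 else lam) :
    lrObjective c w γ (cutMetric S (n / (#S * #Sᶜ)))
      ≤ (1 + (1 + lam * n) / (2 * γ)) * (n * cutFin G S / (#S * #Sᶜ)) := by
  set α : ℝ := n / (#S * #Sᶜ) with hα_def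
  set C : ℝ := (cutFin G S : ℝ)
  have hsize : (0 : ℝ) < #S * #Sᶜ := by
    have : 0 < #S * #Sᶜ := by positivity
    exact_mod_cast this
  have hα : 0 ≤ α := by positivity
  have hαsize : α * (#S * #Sᶜ) = n := div_mul_cancel₀ _ hsize.ne'
  have hα_le_one : α ≤ 1 := by
    have hn : #S + #Sᶜ = n := (card_add_card_compl S).trans (Fintype.card_fin n)
    rw [div_le_one hsize]
    exact_mod_cast hn ▸ add_le_mul hS hSc
  have hC : 1 ≤ C :=
    Nat.one_le_cast.mpr (one_le_cutFin hconn (card_pos.mp (by omega : 0 < #S))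
      (card_pos.mp (by omega : 0 < #Sᶜ)))
  have hquad : C * α ^ 2 + lam * (#S * #Sᶜ) * α ^ 2 ≤ (1 + lam * n) * (C * α) := by
    have h₁ : C * α ^ 2 ≤ C * α := by nlinarith [mul_nonneg (by linarith : 0 ≤ C) hα]
    have h₂ : lam * n * α ≤ lam * n * (C * α) := by
      have : (0 : ℝ) ≤ lam * n * α := by positivity
      nlinarith
    linear_combination h₁ + h₂ + lam * α * hαsize
  calc lrObjective c w γ (cutMetric S α)
      ≤ C * α + 1 / (2 * γ) * (C * α ^ 2 + lam * (#S * #Sᶜ) * α ^ 2) := by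
        rw [lrObjective, sum_mul_cutMetric G S α hc]
        gcongr
        exact sum_mul_cutMetric_sq_le G S α hlam hw
    _ ≤ C * α + 1 / (2 * γ) * ((1 + lam * n) * (C * α)) := by gcongr
    _ = (1 + (1 + lam * n) / (2 * γ)) * (n * C / (#S * #Sᶜ)) := by
        rw [hα_def]; ring

theorem stmt7_general {n : ℕ} (G : SimpleGraph (Fin n)) [DecidableRel G.Adj]
    (hconn : G.Connected)
    (φ : Finset (Fin n) → ℝ)
    (hφ : ∀ S : Finset (Fin n),
      φ S = (n : ℝ) * (cutFin G S : ℝ) / ((S.card : ℝ) * (Sᶜ.card : ℝ)))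
    (φstar : ℝ)
    (Sstar : Finset (Fin n)) (hS_ne : Sstar.Nonempty)
    (hφstar : φstar = φ Sstar)
    (hS_two : 2 ≤ Sstar.card ∧ 2 ≤ Sstarᶜ.card)
    (γ lam : ℝ) (hγ : 0 < γ) (hlam : 0 < lam ∧ lam < 1)
    (c w : Fin n → Fin n → ℝ)
    (hc : ∀ i j, c i j = if G.Adj i j then 1 else 0)
    (hw : ∀ i j, w i j = if G.Adj i j then 1 else lam)
    (xh : Fin n → Fin n → ℝ)
    (hxh_opt : ∀ x : Fin n → Fin n → ℝ, lrFeas x →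
      (∑ p ∈ pairsFin n, c p.1 p.2 * xh p.1 p.2)
          + (1 / (2 * γ)) * ∑ p ∈ pairsFin n, w p.1 p.2 * (xh p.1 p.2) ^ 2
        ≤ (∑ p ∈ pairsFin n, c p.1 p.2 * x p.1 p.2)
          + (1 / (2 * γ)) * ∑ p ∈ pairsFin n, w p.1 p.2 * (x p.1 p.2) ^ 2) :
    (∑ p ∈ pairsFin n, c p.1 p.2 * xh p.1 p.2)
        + (1 / (2 * γ)) * ∑ p ∈ pairsFin n, w p.1 p.2 * (xh p.1 p.2) ^ 2
      ≤ (1 + (1 + lam * n) / (2 * γ)) * φstar := by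
  have hSc : Sstarᶜ.Nonempty := card_pos.mp (by omega)
  calc lrObjective c w γ xh
      ≤ lrObjective c w γ (cutMetric Sstar (n / (#Sstar * #Sstarᶜ))) :=
        hxh_opt _ (lrFeas_cutMetric hS_ne hSc)
    _ ≤ (1 + (1 + lam * n) / (2 * γ)) * φstar := by
        rw [hφstar, hφ]
        exact lrObjective_cutMetric_le hconn hS_two.1 hS_two.2 hγ hlam.1.le hc hw

/-- For a connected graph with `n > 4` whose optimal sparsest
cut partition has both sides of size at least `2`, with `γ > 0`, `λ ∈ (0,1)`,
`c` the edge indicator and `w = 1` on edges, `λ` elsewhere, the minimum over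
the Leighton–Rao feasible set of `∑ c_ij x_ij + (1/(2γ)) ∑ w_ij x_ij²` is at
most `(1 + (1 + λn)/(2γ)) φ*`. -/
theorem stmt7 {n : ℕ} (G : SimpleGraph (Fin n)) [DecidableRel G.Adj]
    (hconn : G.Connected) (hn : 4 < n)
    (φ : Finset (Fin n) → ℝ)
    (hφ : ∀ S : Finset (Fin n),
      φ S = (n : ℝ) * (cutFin G S : ℝ) / ((S.card : ℝ) * (Sᶜ.card : ℝ)))
    (φstar : ℝ)
    (Sstar : Finset (Fin n)) (hS_ne : Sstar.Nonempty)
    (hS_proper : Sstar ≠ Finset.univ)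
    (hφstar : φstar = φ Sstar)
    (hS_opt : ∀ S : Finset (Fin n), S.Nonempty → S ≠ Finset.univ → φstar ≤ φ S)
    (hS_two : 2 ≤ Sstar.card ∧ 2 ≤ Sstarᶜ.card)
    (γ lam : ℝ) (hγ : 0 < γ) (hlam : 0 < lam ∧ lam < 1)
    (c w : Fin n → Fin n → ℝ)
    (hc : ∀ i j, c i j = if G.Adj i j then 1 else 0)
    (hw : ∀ i j, w i j = if G.Adj i j then 1 else lam)
    (xh : Fin n → Fin n → ℝ) (hxh_feas : lrFeas xh)
    (hxh_opt : ∀ x : Fin n → Fin n → ℝ, lrFeas x →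
      (∑ p ∈ pairsFin n, c p.1 p.2 * xh p.1 p.2)
          + (1 / (2 * γ)) * ∑ p ∈ pairsFin n, w p.1 p.2 * (xh p.1 p.2) ^ 2
        ≤ (∑ p ∈ pairsFin n, c p.1 p.2 * x p.1 p.2)
          + (1 / (2 * γ)) * ∑ p ∈ pairsFin n, w p.1 p.2 * (x p.1 p.2) ^ 2) :
    (∑ p ∈ pairsFin n, c p.1 p.2 * xh p.1 p.2)
        + (1 / (2 * γ)) * ∑ p ∈ pairsFin n, w p.1 p.2 * (xh p.1 p.2) ^ 2
      ≤ (1 + (1 + lam * n) / (2 * γ)) * φstar :=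
  stmt7_general G hconn φ hφ φstar Sstar hS_ne hφstar hS_two γ lam hγ hlam c w hc hw xh hxh_opt
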